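/- Let N ≥ 1, let τ_0 < τ_1 < ... < τ_N be real numbers, and let B_0,...,B_N be a Case-(b) Birkhoff basis for these nodes. Define the N×N matrix D_b := (L_j'(τ_i))_{0≤i,j≤N−1}, the vector b_N := (B_N(τ_0),...,B_N(τ_{N−1}))ᵀ ∈ ℝ^N, and the vector l_N := (L_N'(τ_0),...,L_N'(τ_{N−1}))ᵀ ∈ ℝ^N. Then D_b · b_N + l_N = 0, i.e., for every i = 0,...,N−1 one has Σ_{k=0}^{N−1} L_k'(τ_i)·B_N(τ_k) + L_N'(τ_i) = 0. -/

import Mathlib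

open Polynomial Matrix

/-! Since `deg B_N ≤ N`, `B_N` equals its Lagrange interpolant `∑ j, B_N(τ_j) L_j`. Differentiating
at `τ_i` with `i < N` and using `B_N'(τ_i) = 0`, `B_N(τ_N) = 1` gives the identity. -/

theorem Polynomial.eq_sum_C_eval_mul_of_eval_eq_ite {F ι : Type*} [Field F] [Fintype ι]
    [DecidableEq ι] {v : ι → F} (hv : Function.Injective v) {L : ι → F[X]}
    (hLdeg : ∀ j, (L j).degree < Fintype.card ι)
    (hL : ∀ i j, (L j).eval (v i) = if i = j then 1 else 0)
    {p : F[X]} (hp : p.degree < Fintype.card ι) :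
    p = ∑ j, C (p.eval (v j)) * L j := by
  refine eq_of_degrees_lt_of_eval_index_eq Finset.univ hv.injOn hp ?_ fun i _ => ?_
  · rw [← mem_degreeLT]
    refine Submodule.sum_mem _ fun j _ => ?_
    rw [C_mul']
    exact Submodule.smul_mem _ _ (mem_degreeLT.2 (hLdeg j))
  · simp [eval_finsetSum, hL]

theorem Polynomial.eval_derivative_eq_sum_of_eval_eq_ite {F ι : Type*} [Field F] [Fintype ι]
    [DecidableEq ι] {v : ι → F} (hv : Function.Injective v) {L : ι → F[X]}
    (hLdeg : ∀ j, (L j).degree < Fintype.card ι)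
    (hL : ∀ i j, (L j).eval (v i) = if i = j then 1 else 0)
    {p : F[X]} (hp : p.degree < Fintype.card ι) (x : F) :
    (derivative p).eval x = ∑ j, p.eval (v j) * (derivative (L j)).eval x := by
  conv_lhs => rw [eq_sum_C_eval_mul_of_eval_eq_ite hv hLdeg hL hp]
  simp [eval_finsetSum]

theorem birkhoff_case_b_Db_bN_add_lN_eq_zero_general
    (N : ℕ) (τ : Fin (N + 1) → ℝ) (hτ : StrictMono τ)
    (L B : Fin (N + 1) → Polynomial ℝ)
    (hLdeg : ∀ j, (L j).natDegree ≤ N)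
    (hL : ∀ i j, (L j).eval (τ i) = if i = j then 1 else 0)
    (hBdeg : ∀ j, (B j).natDegree ≤ N)
    (hBNN : (B (Fin.last N)).eval (τ (Fin.last N)) = 1)
    (hBN' : ∀ i : Fin N, (derivative (B (Fin.last N))).eval (τ i.castSucc) = 0) :
    (Matrix.of fun i j : Fin N => (derivative (L j.castSucc)).eval (τ i.castSucc)).mulVec
        (fun k : Fin N => (B (Fin.last N)).eval (τ k.castSucc)) +
      (fun i : Fin N => (derivative (L (Fin.last N))).eval (τ i.castSucc)) = 0 := by
  have hdeg {p : ℝ[X]} (hp : p.natDegree ≤ N) : p.degree < Fintype.card (Fin (N + 1)) := by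
    rw [Fintype.card_fin]
    exact (degree_le_of_natDegree_le hp).trans_lt (by exact_mod_cast N.lt_succ_self)
  funext i
  have hexpand := eval_derivative_eq_sum_of_eval_eq_ite hτ.injective (fun j => hdeg (hLdeg j)) hL
    (hdeg (hBdeg (Fin.last N))) (τ i.castSucc)
  rw [hBN' i, Fin.sum_univ_castSucc, hBNN, one_mul] at hexpand
  simp only [Pi.add_apply, mulVec, dotProduct, of_apply, Pi.zero_apply, hexpand, mul_comm]

/-- Proposition 2 analogue (Case (b)): `D_b · b_N + l_N = 0`, i.e. for every
`i = 0,…,N-1`, `Σ_{k=0}^{N-1} L_k'(τ_i)·B_N(τ_k) + L_N'(τ_i) = 0`. -/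
theorem birkhoff_case_b_Db_bN_add_lN_eq_zero
    (N : ℕ) (hN : 1 ≤ N) (τ : Fin (N + 1) → ℝ) (hτ : StrictMono τ)
    (L B : Fin (N + 1) → Polynomial ℝ)
    (hLdeg : ∀ j, (L j).natDegree ≤ N)
    (hL : ∀ i j, (L j).eval (τ i) = if i = j then 1 else 0)
    (hBdeg : ∀ j, (B j).natDegree ≤ N)
    (hBNN : (B (Fin.last N)).eval (τ (Fin.last N)) = 1)
    (hBjN : ∀ j : Fin N, (B j.castSucc).eval (τ (Fin.last N)) = 0)
    (hBN' : ∀ i : Fin N, (derivative (B (Fin.last N))).eval (τ i.castSucc) = 0)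
    (hBj' : ∀ i j : Fin N,
      (derivative (B j.castSucc)).eval (τ i.castSucc) = if i = j then 1 else 0) :
    (Matrix.of fun i j : Fin N => (derivative (L j.castSucc)).eval (τ i.castSucc)).mulVec
        (fun k : Fin N => (B (Fin.last N)).eval (τ k.castSucc)) +
      (fun i : Fin N => (derivative (L (Fin.last N))).eval (τ i.castSucc)) = 0 :=
  birkhoff_case_b_Db_bN_add_lN_eq_zero_general N τ hτ L B hLdeg hL hBdeg hBNN hBN'
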